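/- For every real ω, every integer n, and every real t, one has |sin(ω·sin(t)) − sin((−1)^n·ω·(t − n·π))| ≤ |ω|·|t − n·π|³/6. Thus near every point t = n·π, the SPE coordinate sin(ω·sin(t)) agrees with the pure sinusoid of frequency ω (up to sign) to third order in t − n·π. -/

import Mathlib

open Real

lemma sin_ge_sub_cube' {x : ℝ} (hx : 0 ≤ x) : x - x ^ 3 / 6 ≤ Real.sin x := by
  have hd : ∀ y : ℝ, HasDerivAt (fun x : ℝ => Real.sin x - (x - x ^ 3 / 6))
      (Real.cos y - (1 - (3 : ℕ) * y ^ 2 / 6)) y := by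
    intro y
    have h1 := (Real.hasDerivAt_sin y)
    have h2 := ((hasDerivAt_pow 3 y).div_const 6)
    have h3 := (hasDerivAt_id y).sub h2
    have := h1.sub h3
    exact this
  have hmono : MonotoneOn (fun x : ℝ => Real.sin x - (x - x ^ 3 / 6)) (Set.Ici 0) := by
    apply monotoneOn_of_deriv_nonneg (convex_Ici 0)
    · fun_prop
    · fun_prop
    · intro y hy
      rw [(hd y).deriv]
      have := Real.one_sub_sq_div_two_le_cos (x := y)
      push_cast
      nlinarith
  have h0 := hmono (Set.self_mem_Ici) (Set.mem_Ici.2 hx) hx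
  simp only [Real.sin_zero] at h0
  nlinarith [h0]

lemma abs_sin_le_nonneg {x : ℝ} (hx : 0 ≤ x) : |Real.sin x| ≤ x := by
  rcases le_or_gt 1 x with h1 | h1
  · exact le_trans (abs_le.2 ⟨Real.neg_one_le_sin x, Real.sin_le_one x⟩) h1
  · have h2 := Real.sin_le hx
    have h3 := sin_ge_sub_cube' hx
    have hcube : x ^ 3 ≤ x := by nlinarith [sq_nonneg x, mul_nonneg hx hx]
    rw [abs_le]
    constructor <;> nlinarith

lemma abs_sin_le_abs' (x : ℝ) : |Real.sin x| ≤ |x| := by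
  rcases le_or_gt 0 x with hx | hx
  · rw [abs_of_nonneg hx]; exact abs_sin_le_nonneg hx
  · have h := abs_sin_le_nonneg (x := -x) (by linarith)
    rw [Real.sin_neg, abs_neg] at h
    rw [abs_of_neg hx]; exact h

lemma sin_lipschitz' (a b : ℝ) : |Real.sin a - Real.sin b| ≤ |a - b| := by
  rw [Real.sin_sub_sin, abs_mul, abs_mul]
  calc |2| * |Real.sin ((a - b) / 2)| * |Real.cos ((a + b) / 2)|
      ≤ |2| * |(a - b) / 2| * 1 := by
        apply mul_le_mul
        · exact mul_le_mul_of_nonneg_left (abs_sin_le_abs' _) (abs_nonneg _)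
        · exact Real.abs_cos_le_one _
        · exact abs_nonneg _
        · positivity
    _ = |a - b| := by rw [abs_div]; norm_num; ring

lemma abs_sin_sub_le (x : ℝ) : |Real.sin x - x| ≤ |x| ^ 3 / 6 := by
  rcases le_or_gt 0 x with hx | hx
  · have h1 := Real.sin_le hx
    have h2 := sin_ge_sub_cube' hx
    rw [abs_of_nonneg hx, abs_le]
    constructor <;> nlinarith
  · have hx' : 0 ≤ -x := by linarith
    have h1 := Real.sin_le hx'
    have h2 := sin_ge_sub_cube' hx'
    rw [Real.sin_neg] at h1 h2
    rw [abs_of_neg hx, abs_le]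
    constructor <;> nlinarith

/-- Near every `t = n * π` the SPE branch `sin (ω * sin t)` agrees with the pure
sinusoid of frequency `ω` (up to sign) to third order in `t − n * π`. -/
theorem spe_sin_branch_third_order (ω : ℝ) (n : ℤ) (t : ℝ) :
    |Real.sin (ω * Real.sin t) - Real.sin ((-1) ^ n * ω * (t - n * π))| ≤
      |ω| * |t - n * π| ^ 3 / 6 := by
  set s := t - n * π with hs
  have hsin : Real.sin t = (-1) ^ n * Real.sin s := by
    have ht : t = s + n * π := by ring
    rw [ht, Real.sin_add_int_mul_pi]
  have hlip : |Real.sin (ω * Real.sin t) - Real.sin ((-1) ^ n * ω * s)| ≤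
      |ω * Real.sin t - (-1) ^ n * ω * s| := sin_lipschitz' _ _
  refine hlip.trans ?_
  have hdiff : ω * Real.sin t - (-1) ^ n * ω * s = (-1) ^ n * ω * (Real.sin s - s) := by
    rw [hsin]; ring
  rw [hdiff, abs_mul, abs_mul]
  have hpow : |((-1 : ℝ)) ^ n| = 1 := by
    rcases Int.even_or_odd n with h | h
    · rw [h.neg_one_zpow]; simp
    · rw [Odd.neg_one_zpow h]; simp
  rw [hpow, one_mul]
  calc |ω| * |Real.sin s - s| ≤ |ω| * (|s| ^ 3 / 6) :=
        mul_le_mul_of_nonneg_left (abs_sin_sub_le s) (abs_nonneg _)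
    _ = |ω| * |s| ^ 3 / 6 := by ring
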